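/- Let B = {132}. For all (g₁,g₂) ∈ ℕ² with g₁ + g₂ ≥ 1: if g₂ ≥ 1 then |Z(B;1;(g₁,g₂))| = Σ_{i=0}^{g₁−1} |Z(B;1;(i, g₁+g₂−i−1))| + |Z(B;1;(g₁,g₂−1))|, and if g₂ = 0 then |Z(B;1;(g₁,0))| = Σ_{i=0}^{g₁−1} |Z(B;1;(i, g₁−i−1))|. -/
import Mathlib


/-- A permutation of arbitrary length: a length `n` together with a
bijection of `Fin n` (0-indexed positions and values). -/
abbrev PermAny : Type := Σ n : ℕ, Equiv.Perm (Fin n)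

/-- `β` is contained as a pattern in `π`. -/
def ContainsPat {k n : ℕ} (β : Equiv.Perm (Fin k)) (π : Equiv.Perm (Fin n)) : Prop :=
  ∃ f : Fin k → Fin n, StrictMono f ∧ ∀ a b : Fin k, β a < β b ↔ π (f a) < π (f b)

/-- `Av(B)`: the permutations avoiding every member of `B`. -/
def AvSet (B : Set PermAny) : Set PermAny :=
  {p | ∀ b ∈ B, ¬ ContainsPat b.2 p.2}

/-- A permutation class: closed downwards under pattern containment. -/
def IsPermClass (C : Set PermAny) : Prop :=
  ∀ p ∈ C, ∀ q : PermAny, ContainsPat q.2 p.2 → q ∈ C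

/-- The positions `a,…,b` form an interval of `π`: the corresponding values
form a set of consecutive integers. -/
def IsIntervalAt {n : ℕ} (π : Equiv.Perm (Fin n)) (a b : Fin n) : Prop :=
  a ≤ b ∧ ∃ c : ℕ,
    (Finset.Icc a b).image (fun i => (π i : ℕ)) = Finset.Icc c (c + ((b : ℕ) - (a : ℕ)))

/-- A permutation is simple when all of its intervals are trivial. -/
def IsSimplePerm {n : ℕ} (π : Equiv.Perm (Fin n)) : Prop :=
  ∀ a b : Fin n, IsIntervalAt π a b → a = b ∨ ((a : ℕ) = 0 ∧ (b : ℕ) = n - 1)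

/-- `Z(B;π;g)`: the set of `B`-avoiding permutations of length `k + ‖g‖` whose
`k` smallest values occupy the positions prescribed by the gap vector `g`
and form the pattern `π`.  (0-indexed: entry `π r` sits at position
`g 0 + ⋯ + g r + r`.) -/
def ZSet (B : Set PermAny) {k : ℕ} (π : Equiv.Perm (Fin k)) (g : Fin (k + 1) → ℕ) :
    Set (Equiv.Perm (Fin (k + ∑ j, g j))) :=
  {p | (⟨k + ∑ j, g j, p⟩ : PermAny) ∈ AvSet B ∧
    ∀ r : Fin k, ∀ i : Fin (k + ∑ j, g j),
      (i : ℕ) = (∑ j ∈ Finset.univ.filter fun j : Fin (k + 1) => (j : ℕ) ≤ (r : ℕ), g j)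
          + (r : ℕ) →
      (p i : ℕ) = (π r : ℕ)}

/-- `J(π)`: the set of gap positions `j` such that `Z(B;π;g)` is empty whenever
`g j > 0`. -/
def JSet (B : Set PermAny) {k : ℕ} (π : Equiv.Perm (Fin k)) : Set (Fin (k + 1)) :=
  {j | ∀ g : Fin (k + 1) → ℕ, 0 < g j → ZSet B π g = ∅}

/-- `d_r(π)`: delete the entry at position `r` from `π` and standardize. -/
def delEntry {k : ℕ} (π : Equiv.Perm (Fin (k + 1))) (r : Fin (k + 1)) : Equiv.Perm (Fin k) :=
  Equiv.removeNone ((finSuccEquiv' r).symm.trans (π.trans (finSuccEquiv' (π r))))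

/-- `d_r(g)`: merge the gaps on either side of position `r`. -/
def delGap {k : ℕ} (g : Fin (k + 2) → ℕ) (r : Fin (k + 1)) : Fin (k + 1) → ℕ :=
  fun j =>
    if (j : ℕ) < (r : ℕ) then g (Fin.castSucc j)
    else if (j : ℕ) = (r : ℕ) then g (Fin.castSucc j) + g j.succ
    else g j.succ

/-- The entry `π r` is ES-reducible for `π` with respect to `B`
(Zeilberger's original notion). -/
def ESRed (B : Set PermAny) {k : ℕ} (π : Equiv.Perm (Fin (k + 1))) (r : Fin (k + 1)) : Prop :=
  ∀ g : Fin (k + 2) → ℕ, (∀ j ∈ JSet B π, g j = 0) →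
    (ZSet B π g).ncard = (ZSet B (delEntry π r) (delGap g r)).ncard

/-- The entry `π r` is ES⁺-reducible for `π` with respect to `B`. -/
def ESPlusRed (B : Set PermAny) {k : ℕ} (π : Equiv.Perm (Fin (k + 1))) (r : Fin (k + 1)) : Prop :=
  ∀ g : Fin (k + 2) → ℕ, (ZSet B π g).Nonempty →
    (ZSet B π g).ncard = (ZSet B (delEntry π r) (delGap g r)).ncard

/-- `G_r(π)`: the largest lower order ideal of gap vectors `g` such that for all
`h ≤ g`, either `Z(B;π;h)` is nonempty or `Z(B;d_r(π);d_r(h))` is empty. -/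
def GrSet (B : Set PermAny) {k : ℕ} (π : Equiv.Perm (Fin (k + 1))) (r : Fin (k + 1)) :
    Set (Fin (k + 2) → ℕ) :=
  {g | ∀ h : Fin (k + 2) → ℕ, h ≤ g →
    (ZSet B π h).Nonempty ∨ ZSet B (delEntry π r) (delGap h r) = ∅}

noncomputable def p132 : Equiv.Perm (Fin 3) := Equiv.ofBijective ![0, 2, 1] (by decide)



namespace Scratch

lemma containsPat_p132_iff {n : ℕ} (q : Equiv.Perm (Fin n)) :
    ContainsPat p132 q ↔
      ∃ i j k : Fin n, i < j ∧ j < k ∧ q i < q k ∧ q k < q j := by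
  constructor
  · rintro ⟨f, hf, hp⟩
    refine ⟨f 0, f 1, f 2, hf (by decide), hf (by decide), ?_, ?_⟩
    · exact (hp 0 2).mp (by decide)
    · exact (hp 2 1).mp (by decide)
  · rintro ⟨i, j, k, hij, hjk, h1, h2⟩
    rw [Fin.lt_def] at hij hjk h1 h2
    refine ⟨![i, j, k], ?_, ?_⟩
    · intro a b hab
      rw [Fin.lt_def] at hab ⊢
      fin_cases a <;> fin_cases b <;> simp_all <;> omega
    · intro a b
      rw [Fin.lt_def, Fin.lt_def]
      fin_cases a <;> fin_cases b <;>
        simp [p132, Matrix.cons_val_zero, Matrix.cons_val_one] <;> omega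

end Scratch

namespace Scratch2
open Equiv

lemma optionCongr_removeNone {α β : Type*} (e : Option α ≃ Option β) (h : e none = none) :
    (Equiv.removeNone e).optionCongr = e := by
  apply Equiv.ext
  intro x
  cases x with
  | none => simpa using h.symm
  | some a =>
    have h2 : ∃ x', e (some a) = some x' := by
      rcases hcase : e (some a) with _ | b
      · exact absurd (e.injective (hcase.trans h.symm)) (by simp)
      · exact ⟨b, rfl⟩
    simpa using Equiv.removeNone_some e h2

variable {n : ℕ}

def ins (q : Equiv.Perm (Fin n)) (t : Fin (n + 1)) : Equiv.Perm (Fin (n + 1)) :=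
  (finSuccEquiv' t).trans (q.optionCongr.trans (finSuccEquiv' 0).symm)

@[simp] lemma ins_at (q : Equiv.Perm (Fin n)) (t : Fin (n + 1)) : ins q t t = 0 := by
  simp [ins]

@[simp] lemma ins_succAbove (q : Equiv.Perm (Fin n)) (t : Fin (n + 1)) (i : Fin n) :
    ins q t (t.succAbove i) = (q i).succ := by
  simp [ins, finSuccEquiv'_succAbove, Fin.zero_succAbove]

lemma ins_inj (t : Fin (n + 1)) : Function.Injective (fun q : Equiv.Perm (Fin n) => ins q t) := by
  intro q q' h
  ext i
  have := DFunLike.congr_fun h (t.succAbove i)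
  simp only [ins_succAbove] at this
  exact congrArg Fin.val (Fin.succ_injective _ this)

lemma ins_surj (t : Fin (n + 1)) (p : Equiv.Perm (Fin (n + 1))) (hp : p t = 0) :
    ∃ q : Equiv.Perm (Fin n), ins q t = p := by
  set e : Option (Fin n) ≃ Option (Fin n) :=
    (finSuccEquiv' t).symm.trans (p.trans (finSuccEquiv' 0)) with he
  have hnone : e none = none := by simp [he, hp]
  refine ⟨Equiv.removeNone e, ?_⟩
  rw [ins, optionCongr_removeNone e hnone, he]
  ext x
  simp

lemma succAbove_val (t : Fin (n + 1)) (i : Fin n) :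
    ((t.succAbove i : Fin (n + 1)) : ℕ) = if (i : ℕ) < (t : ℕ) then (i : ℕ) else (i : ℕ) + 1 := by
  by_cases h : (i : ℕ) < (t : ℕ)
  · rw [Fin.succAbove_of_castSucc_lt _ _ (by rwa [Fin.lt_def])]
    simp [h]
  · rw [Fin.succAbove_of_le_castSucc _ _ (by rw [Fin.le_def]; simpa using Nat.le_of_not_lt h)]
    simp [h]

end Scratch2

namespace Scratch3
open Scratch Scratch2

variable {n : ℕ}

def MonoAfter (m : ℕ) (q : Equiv.Perm (Fin n)) : Prop :=
  ∀ i j : Fin n, m ≤ (i : ℕ) → i < j → q i < q j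

lemma ins_contains_iff (q : Equiv.Perm (Fin n)) (t : Fin (n + 1)) :
    ContainsPat p132 (ins q t) ↔
      ContainsPat p132 q ∨ ∃ i j : Fin n, (t : ℕ) ≤ (i : ℕ) ∧ i < j ∧ q j < q i := by
  rw [containsPat_p132_iff, containsPat_p132_iff]
  constructor
  · rintro ⟨a, b, c, hab, hbc, h1, h2⟩
    set p := ins q t with hpdef
    have hpt : p t = 0 := ins_at q t
    have hb : b ≠ t := by
      intro hbt
      rw [hbt, hpt] at h2
      exact absurd (h1.trans h2) (Fin.not_lt_zero _)
    have hc : c ≠ t := by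
      intro hct
      rw [hct, hpt] at h1
      exact absurd h1 (Fin.not_lt_zero _)
    obtain ⟨i, hi⟩ := Fin.exists_succAbove_eq hb
    obtain ⟨j, hj⟩ := Fin.exists_succAbove_eq hc
    by_cases ha : a = t
    · right
      refine ⟨i, j, ?_, ?_, ?_⟩
      · -- t < succAbove i implies t ≤ i
        have : (t : ℕ) < (t.succAbove i : ℕ) := by
          rw [hi]; exact_mod_cast (ha ▸ hab)
        rw [succAbove_val] at this
        split at this <;> omega
      · rw [← Fin.succAbove_lt_succAbove_iff (p := t), hi, hj]; exact hbc
      · rw [← hi, ← hj, ins_succAbove, ins_succAbove] at h2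
        exact (Fin.succ_lt_succ_iff).mp h2
    · left
      obtain ⟨a', ha'⟩ := Fin.exists_succAbove_eq ha
      refine ⟨a', i, j, ?_, ?_, ?_, ?_⟩
      · rw [← Fin.succAbove_lt_succAbove_iff (p := t), ha', hi]; exact hab
      · rw [← Fin.succAbove_lt_succAbove_iff (p := t), hi, hj]; exact hbc
      · rw [← ha', ← hj, ins_succAbove, ins_succAbove] at h1
        exact (Fin.succ_lt_succ_iff).mp h1
      · rw [← hi, ← hj, ins_succAbove, ins_succAbove] at h2
        exact (Fin.succ_lt_succ_iff).mp h2
  · rintro (⟨i, j, k, hij, hjk, h1, h2⟩ | ⟨i, j, hti, hij, hvij⟩)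
    · exact ⟨t.succAbove i, t.succAbove j, t.succAbove k,
        Fin.succAbove_lt_succAbove_iff.mpr hij, Fin.succAbove_lt_succAbove_iff.mpr hjk,
        by simpa [Fin.succ_lt_succ_iff] using h1,
        by simpa [Fin.succ_lt_succ_iff] using h2⟩
    · refine ⟨t, t.succAbove i, t.succAbove j, ?_,
        Fin.succAbove_lt_succAbove_iff.mpr hij, ?_, ?_⟩
      · rw [Fin.lt_def, succAbove_val]
        split <;> omega
      · rw [ins_at, ins_succAbove]
        exact Fin.succ_pos _
      · rw [ins_succAbove, ins_succAbove]
        exact Fin.succ_lt_succ_iff.mpr hvij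

end Scratch3

namespace Scratch4
open Scratch Scratch2 Scratch3

def Wset (n m : ℕ) : Set (Equiv.Perm (Fin n)) :=
  {q | ¬ ContainsPat p132 q ∧ ∀ i : Fin n, (i : ℕ) = m → ((q i : ℕ) = 0)}

variable {n : ℕ}

lemma mem_W_ins_iff {m : ℕ} (hm : m ≤ n) (q : Equiv.Perm (Fin n)) :
    ins q ⟨m, by omega⟩ ∈ Wset (n + 1) m ↔ ¬ ContainsPat p132 q ∧ MonoAfter m q := by
  set t : Fin (n + 1) := ⟨m, by omega⟩ with ht
  constructor
  · rintro ⟨hav, -⟩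
    rw [ins_contains_iff] at hav
    push_neg at hav
    obtain ⟨h1, h2⟩ := hav
    refine ⟨h1, ?_⟩
    intro i j hmi hij
    have hne : q i ≠ q j := fun h => absurd (q.injective h) (ne_of_lt hij)
    have hle := h2 i j hmi hij
    exact lt_of_le_of_ne hle hne
  · rintro ⟨h1, h2⟩
    refine ⟨?_, ?_⟩
    · rw [ins_contains_iff]
      push_neg
      exact ⟨h1, fun i j hti hij => le_of_lt (h2 i j hti hij)⟩
    · intro i hi
      have : i = t := Fin.ext hi
      rw [this, ins_at]
      rfl

lemma W_eq_image {m : ℕ} (hm : m ≤ n) :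
    Wset (n + 1) m =
      (fun q : Equiv.Perm (Fin n) => ins q ⟨m, by omega⟩) ''
        {q | ¬ ContainsPat p132 q ∧ MonoAfter m q} := by
  ext p
  constructor
  · rintro hp
    have hpt : p ⟨m, by omega⟩ = 0 := by
      have := hp.2 ⟨m, by omega⟩ rfl
      exact Fin.ext (by simpa using this)
    obtain ⟨q, hq⟩ := ins_surj _ p hpt
    exact ⟨q, (mem_W_ins_iff hm q).mp (hq ▸ hp), hq⟩
  · rintro ⟨q, hq, rfl⟩
    exact (mem_W_ins_iff hm q).mpr hq

lemma V_eq_biUnion {m : ℕ} (hn : 0 < n) (hm : m ≤ n) :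
    {q : Equiv.Perm (Fin n) | ¬ ContainsPat p132 q ∧ MonoAfter m q} =
      ⋃ i ∈ Finset.range (min (m + 1) n), Wset n i := by
  ext q
  simp only [Set.mem_setOf_eq, Set.mem_iUnion, Finset.mem_range, exists_prop]
  constructor
  · rintro ⟨hav, hmono⟩
    set z : Fin n := q.symm ⟨0, hn⟩ with hz
    have hqz : q z = ⟨0, hn⟩ := q.apply_symm_apply _
    have hzm : (z : ℕ) ≤ m := by
      by_contra hcon
      push_neg at hcon
      have hlt := hmono ⟨m, lt_trans hcon z.isLt⟩ z (le_refl _) (by rwa [Fin.lt_def])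
      rw [hqz, Fin.lt_def] at hlt
      simp at hlt
    refine ⟨z, by omega, hav, ?_⟩
    intro i hi
    have : i = z := Fin.ext hi
    rw [this, hqz]
  · rintro ⟨i, hilt, hav, hpos⟩
    have hin : i < n := lt_of_lt_of_le hilt (min_le_right _ _)
    have him : i ≤ m := Nat.lt_succ_iff.mp (lt_of_lt_of_le hilt (min_le_left _ _))
    set pi : Fin n := ⟨i, hin⟩ with hpi
    have hqpi : (q pi : ℕ) = 0 := hpos pi rfl
    refine ⟨hav, ?_⟩
    intro a b hma hab
    have hvne : ∀ x y : Fin n, x ≠ y → (q x : ℕ) ≠ (q y : ℕ) := by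
      intro x y hxy hv
      exact hxy (q.injective (Fin.ext hv))
    by_cases hapi : a = pi
    · have hbne : b ≠ pi := ne_of_gt (hapi ▸ hab)
      have := hvne b pi hbne
      rw [Fin.lt_def, hapi, hqpi]
      omega
    · have hpia : pi < a := by
        rw [Fin.lt_def]
        have hle : (pi : ℕ) ≤ (a : ℕ) := le_trans him hma
        rcases lt_or_eq_of_le hle with h | h
        · exact h
        · exact absurd (Fin.ext h.symm) hapi
      by_contra hcon
      push_neg at hcon
      have hne : q b ≠ q a := fun h => absurd (q.injective h) (ne_of_gt hab)
      have hba : q b < q a := lt_of_le_of_ne hcon hne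
      have hb0 : q pi < q b := by
        have hbpi : b ≠ pi := ne_of_gt (hpia.trans hab)
        have := hvne b pi hbpi
        rw [Fin.lt_def, hqpi]
        omega
      exact hav ((containsPat_p132_iff q).mpr ⟨pi, a, b, hpia, hab, hb0, hba⟩)

lemma Wset_disjoint {i j : ℕ} (hij : i ≠ j) (hi : i < n) (hj : j < n) :
    Disjoint (Wset n i) (Wset n j) := by
  rw [Set.disjoint_left]
  rintro q ⟨-, hqi⟩ ⟨-, hqj⟩
  have h1 : (q ⟨i, hi⟩ : ℕ) = 0 := hqi ⟨i, hi⟩ rfl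
  have h2 : (q ⟨j, hj⟩ : ℕ) = 0 := hqj ⟨j, hj⟩ rfl
  have : (⟨i, hi⟩ : Fin n) = ⟨j, hj⟩ := q.injective (Fin.ext (h1.trans h2.symm))
  exact hij (congrArg Fin.val this)

lemma card_biUnion (K : ℕ) (hK : K ≤ n) :
    (⋃ i ∈ Finset.range K, Wset n i).ncard = ∑ i ∈ Finset.range K, (Wset n i).ncard := by
  induction K with
  | zero => simp
  | succ k ih =>
    rw [Finset.range_add_one, Finset.sum_insert (by simp), Finset.set_biUnion_insert]
    rw [Set.ncard_union_eq ?disj (Set.toFinite _) (Set.toFinite _), ih (by omega)]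
    case disj =>
      rw [Set.disjoint_right]
      rintro q hq hq'
      simp only [Set.mem_iUnion, Finset.mem_range, exists_prop] at hq
      obtain ⟨i, hik, hqi⟩ := hq
      exact (Set.disjoint_left.mp (Wset_disjoint (Nat.ne_of_lt hik) (by omega) (by omega)) hqi) hq'

lemma Wcard (m : ℕ) (hn : 0 < n) (hm : m ≤ n) :
    (Wset (n + 1) m).ncard = ∑ i ∈ Finset.range (min (m + 1) n), (Wset n i).ncard := by
  rw [W_eq_image hm, Set.ncard_image_of_injective _ (ins_inj _), V_eq_biUnion hn hm,
    card_biUnion _ (min_le_right _ _)]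

lemma Wcard_congr {n1 n2 m : ℕ} (h : n1 = n2) : (Wset n1 m).ncard = (Wset n2 m).ncard := by
  subst h; rfl

end Scratch4

namespace Scratch5
open Scratch Scratch2 Scratch3 Scratch4

lemma filter_sum (a b : ℕ) :
    (∑ j ∈ Finset.univ.filter fun j : Fin 2 => (j : ℕ) ≤ (((0 : Fin 1)) : ℕ), ![a, b] j) = a := by
  have h : (Finset.univ.filter fun j : Fin 2 => (j : ℕ) ≤ (((0 : Fin 1)) : ℕ)) = {0} := by decide
  rw [h, Finset.sum_singleton]
  rfl

lemma ZSet_eq (a b : ℕ) :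
    ZSet ({⟨3, p132⟩} : Set PermAny) (1 : Equiv.Perm (Fin 1)) ![a, b]
      = Wset (1 + ∑ j, ![a, b] j) a := by
  ext p
  constructor
  · rintro ⟨hav, hpos⟩
    refine ⟨hav ⟨3, p132⟩ rfl, ?_⟩
    intro i hi
    have := hpos 0 i (by rw [filter_sum]; simpa using hi)
    simpa using this
  · rintro ⟨hav, hpos⟩
    refine ⟨?_, ?_⟩
    · intro b' hb'
      rw [Set.mem_singleton_iff] at hb'
      subst hb'
      exact hav
    · intro r i hi
      have hr : r = 0 := Subsingleton.elim r 0
      subst hr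
      rw [filter_sum] at hi
      have := hpos i (by simpa using hi)
      simpa using this

end Scratch5

/-- The enumeration-scheme recurrence for `Av(132)`: for
`g₁ + g₂ ≥ 1`, if `g₂ ≥ 1` then
`|Z(B;1;(g₁,g₂))| = Σ_{i<g₁} |Z(B;1;(i, g₁+g₂−i−1))| + |Z(B;1;(g₁,g₂−1))|`,
and if `g₂ = 0` then `|Z(B;1;(g₁,0))| = Σ_{i<g₁} |Z(B;1;(i, g₁−i−1))|`. -/
theorem ZSet_recurrence_for_132 (g₁ g₂ : ℕ) (h : 1 ≤ g₁ + g₂) :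
    (1 ≤ g₂ →
      (ZSet ({⟨3, p132⟩} : Set PermAny) (1 : Equiv.Perm (Fin 1)) ![g₁, g₂]).ncard =
        (∑ i ∈ Finset.range g₁,
          (ZSet ({⟨3, p132⟩} : Set PermAny) (1 : Equiv.Perm (Fin 1))
            ![i, g₁ + g₂ - i - 1]).ncard) +
        (ZSet ({⟨3, p132⟩} : Set PermAny) (1 : Equiv.Perm (Fin 1)) ![g₁, g₂ - 1]).ncard) ∧
    (g₂ = 0 →
      (ZSet ({⟨3, p132⟩} : Set PermAny) (1 : Equiv.Perm (Fin 1)) ![g₁, 0]).ncard =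
        ∑ i ∈ Finset.range g₁,
          (ZSet ({⟨3, p132⟩} : Set PermAny) (1 : Equiv.Perm (Fin 1))
            ![i, g₁ - i - 1]).ncard) := by
  constructor
  · intro hg2
    rw [Scratch5.ZSet_eq,
      Scratch4.Wcard_congr (show (1 : ℕ) + ∑ j, ![g₁, g₂] j = (g₁ + g₂) + 1 by
        simp only [Fin.sum_univ_two, Matrix.cons_val_zero, Matrix.cons_val_one, Matrix.head_cons]
        omega),
      Scratch4.Wcard g₁ (by omega) (by omega),
      show min (g₁ + 1) (g₁ + g₂) = g₁ + 1 by omega,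
      Finset.sum_range_succ]
    congr 1
    · refine Finset.sum_congr rfl fun i hi => ?_
      rw [Finset.mem_range] at hi
      rw [Scratch5.ZSet_eq,
        Scratch4.Wcard_congr (show (1 : ℕ) + ∑ j, ![i, g₁ + g₂ - i - 1] j = g₁ + g₂ by
          simp only [Fin.sum_univ_two, Matrix.cons_val_zero, Matrix.cons_val_one, Matrix.head_cons]
          omega)]
    · rw [Scratch5.ZSet_eq,
        Scratch4.Wcard_congr (show (1 : ℕ) + ∑ j, ![g₁, g₂ - 1] j = g₁ + g₂ by
          simp only [Fin.sum_univ_two, Matrix.cons_val_zero, Matrix.cons_val_one, Matrix.head_cons]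
          omega)]
  · intro hg2
    subst hg2
    have hmin : min (g₁ + 1) (g₁ - 1 + 1) = g₁ := by omega
    rw [Scratch5.ZSet_eq,
      Scratch4.Wcard_congr (show (1 : ℕ) + ∑ j, ![g₁, 0] j = (g₁ - 1 + 1) + 1 by
        simp only [Fin.sum_univ_two, Matrix.cons_val_zero, Matrix.cons_val_one, Matrix.head_cons]
        omega),
      Scratch4.Wcard g₁ (by omega) (by omega),
      hmin]
    refine Finset.sum_congr (by congr 1) fun i hi => ?_
    rw [Finset.mem_range] at hi
    rw [Scratch5.ZSet_eq,
      Scratch4.Wcard_congr (show (1 : ℕ) + ∑ j, ![i, g₁ - i - 1] j = g₁ - 1 + 1 by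
        simp only [Fin.sum_univ_two, Matrix.cons_val_zero, Matrix.cons_val_one, Matrix.head_cons]
        omega)]
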